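/- Suppose V is infinite-dimensional. If X ∈ 𝒢 and Y is a hyperplane of X (i.e., Y ≤ X with dim(X/Y) = 1), then Y ∈ 𝒢. Moreover, for any X, Y ∈ 𝒢 with Y < X (strict inclusion), X and Y lie in different connected components of the Grassmann graph on 𝒢, i.e., there is no finite sequence X = Z₀, Z₁, …, Z_n = Y in 𝒢 with Z_{i-1} and Z_i adjacent for all i. -/

import Mathlib

open Submodule

/-- `X` belongs to the Grassmannian 𝒢: `X` is isomorphic (as a `K`-vector space)
to the quotient `V ⧸ X`, equivalently to one (hence every) complement of `X`. -/
def InG (K V : Type*) [DivisionRing K] [AddCommGroup V] [Module K V]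
    (X : Submodule K V) : Prop :=
  Nonempty (X ≃ₗ[K] (V ⧸ X))

/-- `quotRank K V A B` is the dimension of the quotient space `B / (A ∩ B)`,
where `A ∩ B` is viewed as a subspace of `B`.  For `A ≤ B` this is `dim (B/A)`. -/
noncomputable def quotRank (K V : Type*) [DivisionRing K] [AddCommGroup V] [Module K V]
    (A B : Submodule K V) : Cardinal :=
  Module.rank K (↥B ⧸ (A.comap B.subtype))

/-- `X` and `Y` are adjacent: `dim ((X+Y)/X) = dim ((X+Y)/Y) = 1`. -/
def Adjacent (K V : Type*) [DivisionRing K] [AddCommGroup V] [Module K V]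
    (X Y : Submodule K V) : Prop :=
  quotRank K V X (X ⊔ Y) = 1 ∧ quotRank K V Y (X ⊔ Y) = 1

/-- The distant graph on 𝒢: vertices are the elements of 𝒢, edges the pairs of
(distinct) complementary subspaces. -/
def distantGraph (K V : Type*) [DivisionRing K] [AddCommGroup V] [Module K V] :
    SimpleGraph {X : Submodule K V // InG K V X} where
  Adj X Y := X ≠ Y ∧ IsCompl X.1 Y.1
  symm := ⟨fun _ _ h => ⟨h.1.symm, h.2.symm⟩⟩
  loopless := ⟨fun _ h => h.1 rfl⟩

/-- The Grassmann graph on 𝒢: vertices are the elements of 𝒢, edges the pairs of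
adjacent subspaces. -/
def grassmannGraph (K V : Type*) [DivisionRing K] [AddCommGroup V] [Module K V] :
    SimpleGraph {X : Submodule K V // InG K V X} where
  Adj X Y := Adjacent K V X.1 Y.1
  symm := by
    constructor
    intro X Y h
    obtain ⟨h1, h2⟩ := h
    refine ⟨?_, ?_⟩ <;> rw [sup_comm]
    exacts [h2, h1]
  loopless := by
    constructor
    intro X h
    obtain ⟨h1, -⟩ := h
    rw [quotRank, sup_idem, comap_subtype_self] at h1
    have : Subsingleton (↥X.1 ⧸ (⊤ : Submodule K ↥X.1)) :=
      Submodule.Quotient.subsingleton_iff.mpr rfl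
    rw [rank_subsingleton'] at h1
    exact zero_ne_one h1

/-!
Write `q(A, B)` for the codimension of `A ⊓ B` in `B`. Adjacent subspaces satisfy
`q(A, B) = q(B, A) = 1`, and the relation `q(A, B) = q(B, A) < ℵ₀` is transitive: compare the
codimensions of `D = X ⊓ Y ⊓ Z` in `X`, `Y`, `Z` by the tower law and cancel finite summands.
So the relation holds along every path of the Grassmann graph, but it fails for `Y < X`, where
`q(X, Y) = 0 ≠ q(Y, X)`. For the first part: if `V` is infinite-dimensional, so are `X` and
`V ⧸ X ≅ X`, and passing to a subspace `Y ≤ X` of finite codimension changes neither `dim X`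
nor `dim (V ⧸ X)`.
-/

open Cardinal

universe u in
lemma Submodule.rank_quotient_eq_rank_quotient_add {R : Type*} {M : Type u} [Ring R]
    [AddCommGroup M] [Module R M] [HasRankNullity.{u} R] {p q : Submodule R M} (h : p ≤ q) :
    Module.rank R (M ⧸ p) =
      Module.rank R (M ⧸ q) + Module.rank R (q ⧸ p.comap q.subtype) := by
  have hker : LinearMap.ker (p.mkQ ∘ₗ q.subtype) = p.comap q.subtype := by
    rw [LinearMap.ker_comp, ker_mkQ]
  have hrange : LinearMap.range (p.mkQ ∘ₗ q.subtype) = q.map p.mkQ := by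
    rw [LinearMap.range_comp, range_subtype]
  have e : (q ⧸ p.comap q.subtype) ≃ₗ[R] q.map p.mkQ :=
    hker ▸ hrange ▸ (p.mkQ ∘ₗ q.subtype).quotKerEquivRange
  rw [← (quotientQuotientEquivQuotient p q h).rank_eq, e.rank_eq,
    rank_quotient_add_rank]

lemma Cardinal.eq_of_eq_add_of_lt_aleph0 {a b n : Cardinal} (ha : ℵ₀ ≤ a) (hn : n < ℵ₀)
    (h : a = b + n) :
    a = b := by
  have hb : ℵ₀ ≤ b := by
    rw [h, aleph0_le_add_iff] at ha
    exact ha.resolve_right hn.not_ge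
  rw [h, add_eq_left hb (hn.le.trans hb)]

section

variable {K V : Type*} [DivisionRing K] [AddCommGroup V] [Module K V]

lemma quotRank_inf_left (A B : Submodule K V) :
    quotRank K V (A ⊓ B) B = quotRank K V A B := by
  rw [quotRank, quotRank, comap_inf, comap_subtype_self, inf_top_eq]

lemma quotRank_eq_zero_iff {A B : Submodule K V} : quotRank K V A B = 0 ↔ B ≤ A := by
  rw [quotRank, rank_zero_iff, Submodule.Quotient.subsingleton_iff, comap_subtype_eq_top]

lemma quotRank_sup_left (A B : Submodule K V) :
    quotRank K V A (A ⊔ B) = quotRank K V A B := by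
  rw [← quotRank_inf_left A B, inf_comm, sup_comm]
  exact (LinearMap.quotientInfEquivSupQuotient B A).rank_eq.symm

lemma quotRank_tower {A B C : Submodule K V} (hAB : A ≤ B) (hBC : B ≤ C) :
    quotRank K V A C = quotRank K V B C + quotRank K V A B := by
  have hmap : ((A.comap C.subtype).comap (B.comap C.subtype).subtype).map
      (comapSubtypeEquivOfLe hBC : B.comap C.subtype →ₗ[K] B) = A.comap B.subtype := by
    ext x
    constructor
    · rintro ⟨y, hy, rfl⟩
      simpa using hy
    · intro hx
      exact ⟨⟨⟨x.1, hBC x.2⟩, x.2⟩, hx, rfl⟩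
  unfold quotRank
  rw [rank_quotient_eq_rank_quotient_add (comap_mono hAB),
    (Submodule.Quotient.equiv _ _ (comapSubtypeEquivOfLe hBC) hmap).rank_eq]

lemma quotRank_eq_add_of_le_inf {A B D : Submodule K V} (hD : D ≤ A ⊓ B) :
    quotRank K V D A = quotRank K V B A + quotRank K V D (A ⊓ B) := by
  rw [quotRank_tower hD inf_le_left, ← quotRank_inf_left B A, inf_comm B]

lemma quotRank_mono_right {A B B' : Submodule K V} (hB : B' ≤ B) :
    quotRank K V A B' ≤ quotRank K V A B := by
  refine LinearMap.rank_le_of_injective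
    (mapQ _ _ (inclusion hB) fun x hx => by simpa using hx) ?_
  rw [← LinearMap.ker_eq_bot, mapQ, ker_liftQ_eq_bot]
  intro x hx
  simpa using hx

def AtFiniteDistance (K V : Type*) [DivisionRing K] [AddCommGroup V] [Module K V]
    (A B : Submodule K V) : Prop :=
  quotRank K V A B < ℵ₀ ∧ quotRank K V A B = quotRank K V B A

lemma AtFiniteDistance.refl (A : Submodule K V) : AtFiniteDistance K V A A :=
  ⟨by rw [quotRank_eq_zero_iff.mpr le_rfl]; exact aleph0_pos, rfl⟩

lemma Adjacent.atFiniteDistance {A B : Submodule K V} (h : Adjacent K V A B) :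
    AtFiniteDistance K V A B := by
  have hAB : quotRank K V A B = 1 := (quotRank_sup_left A B).symm.trans h.1
  have hBA : quotRank K V B A = 1 := by
    rw [← quotRank_sup_left, sup_comm]; exact h.2
  exact ⟨hAB ▸ one_lt_aleph0, hAB.trans hBA.symm⟩

lemma AtFiniteDistance.quotRank_eq_of_le_inf {A B D : Submodule K V}
    (h : AtFiniteDistance K V A B) (hD : D ≤ A ⊓ B) :
    quotRank K V D A = quotRank K V D B := by
  rw [quotRank_eq_add_of_le_inf hD,
    quotRank_eq_add_of_le_inf (A := B) (B := A) (inf_comm A B ▸ hD), inf_comm B, h.2]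

lemma AtFiniteDistance.trans {X Y Z : Submodule K V} (hXY : AtFiniteDistance K V X Y)
    (hYZ : AtFiniteDistance K V Y Z) : AtFiniteDistance K V X Z := by
  set D := X ⊓ (Y ⊓ Z)
  have hDXY : D ≤ X ⊓ Y := le_inf inf_le_left (inf_le_right.trans inf_le_left)
  have hDYZ : D ≤ Y ⊓ Z := inf_le_right
  have hDXZ : D ≤ X ⊓ Z := le_inf inf_le_left (inf_le_right.trans inf_le_right)
  have hDY_fin : quotRank K V D Y < ℵ₀ := by
    rw [quotRank_eq_add_of_le_inf hDYZ, quotRank_inf_left]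
    exact add_lt_aleph0 (hYZ.2 ▸ hYZ.1) ((quotRank_mono_right inf_le_left).trans_lt hXY.1)
  have hDXZ_eq : quotRank K V D X = quotRank K V D Z :=
    (hXY.quotRank_eq_of_le_inf hDXY).trans (hYZ.quotRank_eq_of_le_inf hDYZ)
  have hDZ_fin : quotRank K V D Z < ℵ₀ := hYZ.quotRank_eq_of_le_inf hDYZ ▸ hDY_fin
  have hDZ : quotRank K V D Z = quotRank K V X Z + quotRank K V D (X ⊓ Z) := by
    rw [inf_comm X Z]; exact quotRank_eq_add_of_le_inf (inf_comm X Z ▸ hDXZ)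
  have hDX : quotRank K V D X = quotRank K V Z X + quotRank K V D (X ⊓ Z) :=
    quotRank_eq_add_of_le_inf hDXZ
  have hinter_fin : quotRank K V D (X ⊓ Z) < ℵ₀ := (hDZ ▸ le_add_self).trans_lt hDZ_fin
  refine ⟨(hDZ ▸ le_self_add).trans_lt hDZ_fin, ?_⟩
  exact Cardinal.eq_of_add_eq_add_right (hDZ.symm.trans (hDXZ_eq.symm.trans hDX)) hinter_fin

lemma atFiniteDistance_of_reachable {X Y : {Z : Submodule K V // InG K V Z}}
    (h : (grassmannGraph K V).Reachable X Y) : AtFiniteDistance K V X.1 Y.1 := by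
  rw [SimpleGraph.reachable_iff_reflTransGen] at h
  induction h with
  | refl => exact .refl _
  | tail _ hadj ih => exact ih.trans hadj.atFiniteDistance

lemma not_atFiniteDistance_of_lt {X Y : Submodule K V} (h : Y < X) :
    ¬ AtFiniteDistance K V X Y := fun hXY =>
  h.not_ge (quotRank_eq_zero_iff.mp (hXY.2 ▸ quotRank_eq_zero_iff.mpr h.le))

lemma rank_eq_rank_add_quotRank {X Y : Submodule K V} (h : Y ≤ X) :
    Module.rank K X = Module.rank K Y + quotRank K V Y X := by
  rw [← rank_quotient_add_rank (Y.comap X.subtype), (comapSubtypeEquivOfLe h).rank_eq, add_comm]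
  rfl

lemma InG.of_le (hV : ¬ FiniteDimensional K V) {X Y : Submodule K V} (hX : InG K V X)
    (hYX : Y ≤ X) (hfin : quotRank K V Y X < ℵ₀) : InG K V Y := by
  obtain ⟨eX⟩ := hX
  have hXinf : ℵ₀ ≤ Module.rank K X := by
    by_contra! h
    have hVfin : Module.rank K V < ℵ₀ := by
      rw [← rank_quotient_add_rank X, ← eX.rank_eq]
      exact add_lt_aleph0 h h
    exact hV (Module.rank_lt_aleph0_iff.mp hVfin)
  have hQinf : ℵ₀ ≤ Module.rank K (V ⧸ X) := eX.rank_eq ▸ hXinf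
  refine Module.nonempty_linearEquiv_iff_rank_eq.mpr ?_
  calc Module.rank K Y = Module.rank K X :=
        (eq_of_eq_add_of_lt_aleph0 hXinf hfin (rank_eq_rank_add_quotRank hYX)).symm
    _ = Module.rank K (V ⧸ X) := eX.rank_eq
    _ = Module.rank K (V ⧸ X) + quotRank K V Y X := (add_eq_left hQinf (hfin.le.trans hQinf)).symm
    _ = Module.rank K (V ⧸ Y) := (rank_quotient_eq_rank_quotient_add hYX).symm

end

/-- For `V` infinite-dimensional: a hyperplane `Y` of an `X ∈ 𝒢` again lies in 𝒢,
and for `X, Y ∈ 𝒢` with `Y < X` the subspaces `X` and `Y` lie in different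
connected components of the Grassmann graph (no finite path of adjacent elements
of 𝒢 joins them). -/
theorem stmt_17 (K V : Type*) [DivisionRing K] [AddCommGroup V] [Module K V]
    (hV : ¬ FiniteDimensional K V) :
    (∀ X Y : Submodule K V, InG K V X → Y ≤ X → quotRank K V Y X = 1 → InG K V Y) ∧
    (∀ X Y : Submodule K V, (hX : InG K V X) → (hY : InG K V Y) → Y < X →
      ¬ (grassmannGraph K V).Reachable ⟨X, hX⟩ ⟨Y, hY⟩) :=
  ⟨fun _ _ hX hYX h1 => hX.of_le hV hYX (h1 ▸ one_lt_aleph0),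
    fun _ _ _ _ hlt hreach =>
      not_atFiniteDistance_of_lt hlt (atFiniteDistance_of_reachable hreach)⟩
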